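/- Let n ≥ 2 be an integer, let Ω ⊆ ℝⁿ be measurable, let F, G : Ω → [0,∞) be measurable functions, let C₁ > 0 and a_∞ > 1, and suppose that for every ε ∈ (0,1) there exists a_ε ∈ (0,1) such that for all λ > 0, L^n({ζ ∈ Ω : F(ζ) > a_∞ λ}) ≤ C₁ ε L^n({ζ ∈ Ω : F(ζ) > λ}) + L^n({ζ ∈ Ω : G(ζ) > a_ε λ}). Then for every 0 < q < ∞ and 0 < s < ∞ with ‖F‖_{L^{q,s}(Ω)} < ∞, there exist ε ∈ (0,1) depending only on C₁, a_∞, q, s, and a constant C₂ > 0 depending only on C₁, a_∞, q, s and the corresponding value a_ε, such that ‖F‖_{L^{q,s}(Ω)} ≤ C₂ ‖G‖_{L^{q,s}(Ω)}. (This is the derivation of Theorem 1.4 from the good-λ inequality of Theorem 1.3.) -/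

import Mathlib

/-!
Integrate the good-λ inequality against `λ^(s-1) dλ` after raising it to the power `s/q`.
Rescaling `λ ↦ a_∞ λ` and `λ ↦ a_ε λ` only multiplies the integrals by `a_∞^(-s)` and
`a_ε^(-s)`, so `I(F) ≤ K (C₁ ε)^(s/q) I(F) + K a_ε^(-s) I(G)` for the weighted integrals
`I` of the distribution functions, with `K` depending only on `a_∞, q, s`. Choosing `ε`
with `K (C₁ ε)^(s/q) < 1` and using `I(F) < ∞`, the first term is absorbed into the left side.
-/

open MeasureTheory ENNReal

/-- The Lorentz quasinorm
`‖h‖_{L^{q,s}(Ω)} = (q ∫_0^∞ τ^s L^n({ζ ∈ Ω : |h(ζ)| > τ})^{s/q} dτ/τ)^{1/s}`,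
valued in `ℝ≥0∞`. -/
noncomputable def lorentzNorm {n : ℕ} (Ω : Set (EuclideanSpace ℝ (Fin n))) (q s : ℝ)
    (h : EuclideanSpace ℝ (Fin n) → ℝ) : ℝ≥0∞ :=
  (ENNReal.ofReal q *
      ∫⁻ τ in Set.Ioi (0 : ℝ),
        ENNReal.ofReal (τ ^ (s - 1)) * volume {ζ ∈ Ω | τ < |h ζ|} ^ (s / q)) ^ (1 / s)

/-- The Marcinkiewicz (weak Lebesgue) quasinorm
`‖h‖_{L^{q,∞}(Ω)} = sup_{τ>0} τ L^n({ζ ∈ Ω : |h(ζ)| > τ})^{1/q}`, valued in `ℝ≥0∞`. -/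
noncomputable def weakLorentzNorm {n : ℕ} (Ω : Set (EuclideanSpace ℝ (Fin n))) (q : ℝ)
    (h : EuclideanSpace ℝ (Fin n) → ℝ) : ℝ≥0∞ :=
  ⨆ (τ : ℝ) (_ : 0 < τ), ENNReal.ofReal τ * volume {ζ ∈ Ω | τ < |h ζ|} ^ (1 / q)

open Set Filter Topology

theorem lintegral_Ioi_comp_mul_left (g : ℝ → ℝ≥0∞) {c : ℝ} (hc : 0 < c) :
    ∫⁻ x in Ioi 0, g (c * x) = ENNReal.ofReal c⁻¹ * ∫⁻ x in Ioi 0, g x := by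
  let e : ℝ ≃ᵐ ℝ := (Homeomorph.mulLeft₀ c hc.ne').toMeasurableEquiv
  have he : ⇑e = (c * ·) := rfl
  have hpre : e ⁻¹' Ioi 0 = Ioi 0 := by
    ext x
    simp [he, mul_pos_iff_of_pos_left hc]
  have hrestrict := e.restrict_map volume (Ioi 0)
  rw [hpre] at hrestrict
  have hmap : (volume.restrict (Ioi (0 : ℝ))).map e =
      ENNReal.ofReal c⁻¹ • volume.restrict (Ioi 0) := by
    rw [← hrestrict, he, Real.map_volume_mul_left hc.ne', abs_of_pos (inv_pos.2 hc),
      Measure.restrict_smul]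
  rw [← smul_eq_mul, ← lintegral_smul_measure, ← hmap, lintegral_map_equiv]
  rfl

theorem lintegral_Ioi_rpow_mul_comp_mul_left (N : ℝ → ℝ≥0∞) (s : ℝ) {c : ℝ} (hc : 0 < c) :
    ∫⁻ x in Ioi 0, ENNReal.ofReal (x ^ (s - 1)) * N (c * x) =
      ENNReal.ofReal (c ^ (-s)) * ∫⁻ x in Ioi 0, ENNReal.ofReal (x ^ (s - 1)) * N x := by
  have hweight : ∀ x ∈ Ioi (0 : ℝ), ENNReal.ofReal (x ^ (s - 1)) =
      ENNReal.ofReal (c ^ (1 - s)) * ENNReal.ofReal ((c * x) ^ (s - 1)) := by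
    intro x hx
    rw [← ENNReal.ofReal_mul (by positivity), Real.mul_rpow hc.le (le_of_lt hx), ← mul_assoc,
      ← Real.rpow_add hc]
    simp
  calc ∫⁻ x in Ioi 0, ENNReal.ofReal (x ^ (s - 1)) * N (c * x)
      = ∫⁻ x in Ioi 0, ENNReal.ofReal (c ^ (1 - s)) *
          (ENNReal.ofReal ((c * x) ^ (s - 1)) * N (c * x)) :=
        setLIntegral_congr_fun measurableSet_Ioi fun x hx => by rw [hweight x hx, mul_assoc]
    _ = ENNReal.ofReal (c ^ (1 - s)) *
          (ENNReal.ofReal c⁻¹ * ∫⁻ x in Ioi 0, ENNReal.ofReal (x ^ (s - 1)) * N x) := by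
        rw [lintegral_const_mul' _ _ ofReal_ne_top,
          lintegral_Ioi_comp_mul_left (fun x => ENNReal.ofReal (x ^ (s - 1)) * N x) hc]
    _ = ENNReal.ofReal (c ^ (-s)) * ∫⁻ x in Ioi 0, ENNReal.ofReal (x ^ (s - 1)) * N x := by
        rw [← mul_assoc, ← ENNReal.ofReal_mul (by positivity), ← Real.rpow_neg_one,
          ← Real.rpow_add hc]
        ring_nf

theorem lintegral_rpow_le_of_goodLambda {N M : ℝ → ℝ≥0∞} (hN : Measurable N)
    {s p a b : ℝ} {δ : ℝ≥0∞} (hp : 0 ≤ p) (ha : 0 < a) (hb : 0 < b)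
    (hgood : ∀ τ, 0 < τ → N (a * τ) ≤ δ * N τ + M (b * τ)) :
    ∫⁻ τ in Ioi 0, ENNReal.ofReal (τ ^ (s - 1)) * N τ ^ p ≤
      ENNReal.ofReal (a ^ s) * LpAddConst (ENNReal.ofReal p)⁻¹ * δ ^ p *
          (∫⁻ τ in Ioi 0, ENNReal.ofReal (τ ^ (s - 1)) * N τ ^ p) +
        ENNReal.ofReal (a ^ s) * LpAddConst (ENNReal.ofReal p)⁻¹ * ENNReal.ofReal (b ^ (-s)) *
          ∫⁻ τ in Ioi 0, ENNReal.ofReal (τ ^ (s - 1)) * M τ ^ p := by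
  -- `κ` is the constant of the quasi-triangle inequality `(x + y)^p ≤ κ (x^p + y^p)`, `p ≥ 0`.
  set κ := LpAddConst (ENNReal.ofReal p)⁻¹
  set w : ℝ → ℝ≥0∞ := fun τ => ENNReal.ofReal (τ ^ (s - 1))
  set I := fun L : ℝ → ℝ≥0∞ => ∫⁻ τ in Ioi 0, w τ * L τ ^ p
  have hpointwise : ∀ τ ∈ Ioi (0 : ℝ), w τ * N (a * τ) ^ p ≤
      κ * δ ^ p * (w τ * N τ ^ p) + κ * (w τ * M (b * τ) ^ p) := by
    intro τ hτ
    calc w τ * N (a * τ) ^ p ≤ w τ * (κ * ((δ * N τ) ^ p + M (b * τ) ^ p)) := by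
          gcongr
          exact (rpow_le_rpow (hgood τ hτ) hp).trans (rpow_add_le_mul_rpow_add_rpow' _ _ hp)
      _ = κ * δ ^ p * (w τ * N τ ^ p) + κ * (w τ * M (b * τ) ^ p) := by
          rw [mul_rpow_of_nonneg _ _ hp]
          ring
  have hmeas : Measurable fun τ => w τ * N τ ^ p := by fun_prop
  have hscaled : ENNReal.ofReal (a ^ (-s)) * I N ≤
      κ * δ ^ p * I N + κ * (ENNReal.ofReal (b ^ (-s)) * I M) := by
    rw [← lintegral_Ioi_rpow_mul_comp_mul_left (fun τ => N τ ^ p) s ha,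
      ← lintegral_Ioi_rpow_mul_comp_mul_left (fun τ => M τ ^ p) s hb]
    calc _ ≤ ∫⁻ τ in Ioi 0, (κ * δ ^ p * (w τ * N τ ^ p) + κ * (w τ * M (b * τ) ^ p)) :=
          setLIntegral_mono' measurableSet_Ioi hpointwise
      _ = _ := by
          rw [lintegral_add_left (hmeas.const_mul _), lintegral_const_mul _ hmeas,
            lintegral_const_mul' _ _ (LpAddConst_lt_top _).ne]
  calc I N = ENNReal.ofReal (a ^ s) * (ENNReal.ofReal (a ^ (-s)) * I N) := by
        rw [← mul_assoc, ← ENNReal.ofReal_mul (by positivity), ← Real.rpow_add ha]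
        simp
    _ ≤ ENNReal.ofReal (a ^ s) * (κ * δ ^ p * I N + κ * (ENNReal.ofReal (b ^ (-s)) * I M)) := by
        gcongr
    _ = _ := by ring

theorem ENNReal.le_inv_one_sub_mul_of_le_mul_add {x c y : ℝ≥0∞} (hx : x ≠ ⊤) (hc : c < 1)
    (h : x ≤ c * x + y) : x ≤ (1 - c)⁻¹ * y := by
  rw [← ENNReal.div_eq_inv_mul, ENNReal.le_div_iff_mul_le (Or.inl (tsub_pos_of_lt hc).ne')
    (Or.inl (ne_top_of_le_ne_top one_ne_top tsub_le_self)), mul_comm,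
    ENNReal.sub_mul fun _ _ => hx, one_mul]
  exact tsub_le_iff_left.2 h

theorem exists_mem_Ioo_mul_ofReal_mul_rpow_lt_one {K : ℝ≥0∞} (hK : K ≠ ⊤) (C : ℝ) {p : ℝ}
    (hp : 0 < p) : ∃ ε ∈ Ioo (0 : ℝ) 1, K * ENNReal.ofReal (C * ε) ^ p < 1 := by
  have hcont : Continuous fun ε : ℝ => ENNReal.ofReal (C * ε) ^ p :=
    ENNReal.continuous_rpow_const.comp (ENNReal.continuous_ofReal.comp (continuous_const_mul C))
  have hlim : Tendsto (fun ε : ℝ => K * ENNReal.ofReal (C * ε) ^ p) (𝓝[>] 0) (𝓝 0) := by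
    simpa [zero_rpow_of_pos hp] using
      (ENNReal.Tendsto.const_mul (hcont.tendsto 0) (Or.inr hK)).mono_left nhdsWithin_le_nhds
  exact (Eventually.and (Ioo_mem_nhdsGT one_pos) (hlim.eventually (gt_mem_nhds one_pos))).exists

theorem ENNReal.exists_pos_le_ofReal {x : ℝ≥0∞} (hx : x ≠ ⊤) :
    ∃ C : ℝ, 0 < C ∧ x ≤ ENNReal.ofReal C :=
  ⟨x.toReal + 1, by positivity,
    (ENNReal.le_ofReal_iff_toReal_le hx (by positivity)).2 (le_add_of_nonneg_right zero_le_one)⟩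

section Lorentz

variable {n : ℕ} {Ω : Set (EuclideanSpace ℝ (Fin n))} {q s : ℝ}

noncomputable def lorentzIntegral (Ω : Set (EuclideanSpace ℝ (Fin n))) (q s : ℝ)
    (h : EuclideanSpace ℝ (Fin n) → ℝ) : ℝ≥0∞ :=
  ∫⁻ τ in Ioi 0, ENNReal.ofReal (τ ^ (s - 1)) * volume {ζ ∈ Ω | τ < h ζ} ^ (s / q)

theorem lorentzNorm_eq_lorentzIntegral_abs (h : EuclideanSpace ℝ (Fin n) → ℝ) :
    lorentzNorm Ω q s h = (ENNReal.ofReal q * lorentzIntegral Ω q s fun ζ => |h ζ|) ^ (1 / s) :=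
  rfl

theorem lorentzIntegral_mono (hsq : 0 ≤ s / q) {f g : EuclideanSpace ℝ (Fin n) → ℝ}
    (hfg : ∀ ζ, f ζ ≤ g ζ) : lorentzIntegral Ω q s f ≤ lorentzIntegral Ω q s g :=
  lintegral_mono fun _ => by
    gcongr
    exact hfg _

theorem lorentzNorm_le_rpow_mul (hs : 0 < s) {c : ℝ≥0∞} {f g : EuclideanSpace ℝ (Fin n) → ℝ}
    (hfg : lorentzIntegral Ω q s (fun ζ => |f ζ|) ≤ c * lorentzIntegral Ω q s fun ζ => |g ζ|) :
    lorentzNorm Ω q s f ≤ c ^ (1 / s) * lorentzNorm Ω q s g := by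
  rw [lorentzNorm_eq_lorentzIntegral_abs, lorentzNorm_eq_lorentzIntegral_abs,
    ← mul_rpow_of_nonneg _ _ (by positivity), mul_left_comm]
  gcongr

end Lorentz

theorem antitone_measure_setOf_lt {α : Type*} [MeasurableSpace α] (μ : Measure α) (Ω : Set α)
    (h : α → ℝ) : Antitone fun τ => μ {ζ ∈ Ω | τ < h ζ} :=
  fun _ _ hττ' => measure_mono fun _ hζ => ⟨hζ.1, hττ'.trans_lt hζ.2⟩

theorem goodLambda_aInfty_to_lorentz_general (n : ℕ)
    (Ω : Set (EuclideanSpace ℝ (Fin n)))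
    (F G : EuclideanSpace ℝ (Fin n) → ℝ) (hF0 : ∀ x, 0 ≤ F x)
    (C₁ aInf : ℝ) (haInf : 1 < aInf)
    (hgood : ∀ ε ∈ Set.Ioo (0 : ℝ) 1, ∃ aε ∈ Set.Ioo (0 : ℝ) 1, ∀ lam : ℝ, 0 < lam →
      volume {ζ ∈ Ω | aInf * lam < F ζ}
        ≤ ENNReal.ofReal (C₁ * ε) * volume {ζ ∈ Ω | lam < F ζ}
          + volume {ζ ∈ Ω | aε * lam < G ζ}) :
    ∀ q s : ℝ, 0 < q → 0 < s → lorentzNorm Ω q s F ≠ ⊤ →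
      ∃ C₂ : ℝ, 0 < C₂ ∧
        lorentzNorm Ω q s F ≤ ENNReal.ofReal C₂ * lorentzNorm Ω q s G := by
  intro q s hq hs hfin
  have hp : 0 < s / q := div_pos hs hq
  have hFabs : (fun ζ => |F ζ|) = F := funext fun ζ => abs_of_nonneg (hF0 ζ)
  set K := ENNReal.ofReal (aInf ^ s) * LpAddConst (ENNReal.ofReal (s / q))⁻¹
  have hK : K ≠ ⊤ := mul_ne_top ofReal_ne_top (LpAddConst_lt_top _).ne
  obtain ⟨ε, hε, hsmall⟩ := exists_mem_Ioo_mul_ofReal_mul_rpow_lt_one hK C₁ hp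
  obtain ⟨aε, haε, hgoodε⟩ := hgood ε hε
  have hIF : lorentzIntegral Ω q s F ≠ ⊤ := by
    rw [lorentzNorm_eq_lorentzIntegral_abs, hFabs] at hfin
    contrapose! hfin
    simp [hfin, hq, hs]
  have hstep : lorentzIntegral Ω q s F ≤
      K * ENNReal.ofReal (C₁ * ε) ^ (s / q) * lorentzIntegral Ω q s F +
        K * ENNReal.ofReal (aε ^ (-s)) * lorentzIntegral Ω q s G :=
    lintegral_rpow_le_of_goodLambda (antitone_measure_setOf_lt volume Ω F).measurable hp.le
      (zero_lt_one.trans haInf) haε.1 hgoodε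
  set c := (1 - K * ENNReal.ofReal (C₁ * ε) ^ (s / q))⁻¹ * (K * ENNReal.ofReal (aε ^ (-s)))
  have hc : c ^ (1 / s) ≠ ⊤ := rpow_ne_top_of_nonneg (by positivity)
    (mul_ne_top (inv_ne_top.2 (tsub_pos_of_lt hsmall).ne') (mul_ne_top hK ofReal_ne_top))
  have hIFG : lorentzIntegral Ω q s (fun ζ => |F ζ|) ≤ c * lorentzIntegral Ω q s fun ζ => |G ζ| :=
    calc lorentzIntegral Ω q s (fun ζ => |F ζ|) ≤ c * lorentzIntegral Ω q s G := by
          rw [hFabs, mul_assoc]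
          exact ENNReal.le_inv_one_sub_mul_of_le_mul_add hIF hsmall hstep
      _ ≤ c * lorentzIntegral Ω q s fun ζ => |G ζ| := by
          gcongr
          exact lorentzIntegral_mono hp.le fun ζ => le_abs_self (G ζ)
  obtain ⟨C₂, hC₂, hcC₂⟩ := ENNReal.exists_pos_le_ofReal hc
  exact ⟨C₂, hC₂, (lorentzNorm_le_rpow_mul hs hIFG).trans (by gcongr)⟩

/-- Derivation of the Lorentz estimate (Theorem 1.4) from the good-λ inequality of
Theorem 1.3. -/
theorem goodLambda_aInfty_to_lorentz (n : ℕ) (hn : 2 ≤ n)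
    (Ω : Set (EuclideanSpace ℝ (Fin n))) (hΩ : MeasurableSet Ω)
    (F G : EuclideanSpace ℝ (Fin n) → ℝ) (hF0 : ∀ x, 0 ≤ F x) (hG0 : ∀ x, 0 ≤ G x)
    (hFmeas : Measurable F) (hGmeas : Measurable G)
    (C₁ aInf : ℝ) (hC₁ : 0 < C₁) (haInf : 1 < aInf)
    (hgood : ∀ ε ∈ Set.Ioo (0 : ℝ) 1, ∃ aε ∈ Set.Ioo (0 : ℝ) 1, ∀ lam : ℝ, 0 < lam →
      volume {ζ ∈ Ω | aInf * lam < F ζ}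
        ≤ ENNReal.ofReal (C₁ * ε) * volume {ζ ∈ Ω | lam < F ζ}
          + volume {ζ ∈ Ω | aε * lam < G ζ}) :
    ∀ q s : ℝ, 0 < q → 0 < s → lorentzNorm Ω q s F ≠ ⊤ →
      ∃ C₂ : ℝ, 0 < C₂ ∧
        lorentzNorm Ω q s F ≤ ENNReal.ofReal C₂ * lorentzNorm Ω q s G :=
  goodLambda_aInfty_to_lorentz_general n Ω F G hF0 C₁ aInf haInf hgood
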